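/- arXiv:1203.0874 — 3 statements merged into one kernel-verified Lean document; each statement's English description precedes it below -/
import Mathlib

section
/- Let α, β > 0 and let X = (X_t)_{t ≥ 0} be a non-trivial α-IDT process that is (α/β)-selfsimilar. Then X is strictly β-stable. -/
open MeasureTheory ProbabilityTheory

/-- Two processes (indexed by nonnegative real times) have the same finite-dimensional
distributions: for every finite family of nonnegative times, the laws of the corresponding
finite-dimensional marginals coincide. -/
def HasSameFDD {Ω Ω' : Type*} [MeasurableSpace Ω] [MeasurableSpace Ω']
    (P : Measure Ω) (P' : Measure Ω') (X : ℝ → Ω → ℝ) (Y : ℝ → Ω' → ℝ) : Prop :=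
  ∀ (m : ℕ) (t : Fin m → ℝ), (∀ i, 0 ≤ t i) →
    Measure.map (fun ω i => X (t i) ω) P = Measure.map (fun ω i => Y (t i) ω) P'

/-- A process `X` is `α`-IDT if for every positive integer `n`, the time-rescaled process
`(X_{n^{1/α} t})_{t ≥ 0}` has the same finite-dimensional distributions as the sum of `n`
independent copies of `X` (realized canonically on the `n`-fold product space). -/
def IsAlphaIDT {Ω : Type*} [MeasurableSpace Ω] (P : Measure Ω) (α : ℝ)
    (X : ℝ → Ω → ℝ) : Prop :=
  ∀ n : ℕ, 0 < n →
    HasSameFDD P (Measure.pi fun _ : Fin n => P)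
      (fun t ω => X ((n : ℝ) ^ (1 / α) * t) ω)
      (fun t ω => ∑ j, X t (ω j))
/-- A process is `H`-selfsimilar: for every `a > 0`, `(X_{at})_{t ≥ 0}` has the same
finite-dimensional distributions as `(a^H X_t)_{t ≥ 0}`. -/
def IsSelfSimilar {Ω : Type*} [MeasurableSpace Ω] (P : Measure Ω) (H : ℝ)
    (X : ℝ → Ω → ℝ) : Prop :=
  ∀ a : ℝ, 0 < a → HasSameFDD P P (fun t ω => X (a * t) ω) (fun t ω => a ^ H * X t ω)

/-- A process is strictly `β`-stable: for every positive integer `n`, the sum of `n`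
independent copies of `X` (realized canonically on the `n`-fold product space) has the same
finite-dimensional distributions as `(n^{1/β} X_t)_{t ≥ 0}`. -/
def IsStrictlyStable {Ω : Type*} [MeasurableSpace Ω] (P : Measure Ω) (β : ℝ)
    (X : ℝ → Ω → ℝ) : Prop :=
  ∀ n : ℕ, 0 < n →
    HasSameFDD (Measure.pi fun _ : Fin n => P) P
      (fun t ω => ∑ j, X t (ω j))
      (fun t ω => (n : ℝ) ^ (1 / β) * X t ω)

/-- A process is non-trivial if at some nonnegative time it is not almost surely constant. -/
def IsNonTrivialProcess {Ω : Type*} [MeasurableSpace Ω] (P : Measure Ω)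
    (X : ℝ → Ω → ℝ) : Prop :=
  ∃ t : ℝ, 0 ≤ t ∧ ∀ c : ℝ, ¬ (X t =ᵐ[P] fun _ => c)

theorem HasSameFDD.symm {Ω Ω' : Type*} [MeasurableSpace Ω] [MeasurableSpace Ω']
    {P : Measure Ω} {P' : Measure Ω'} {X : ℝ → Ω → ℝ} {Y : ℝ → Ω' → ℝ}
    (h : HasSameFDD P P' X Y) : HasSameFDD P' P Y X :=
  fun m t ht => (h m t ht).symm

theorem HasSameFDD.trans {Ω Ω' Ω'' : Type*} [MeasurableSpace Ω] [MeasurableSpace Ω']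
    [MeasurableSpace Ω''] {P : Measure Ω} {P' : Measure Ω'} {P'' : Measure Ω''}
    {X : ℝ → Ω → ℝ} {Y : ℝ → Ω' → ℝ} {Z : ℝ → Ω'' → ℝ}
    (hXY : HasSameFDD P P' X Y) (hYZ : HasSameFDD P' P'' Y Z) : HasSameFDD P P'' X Z :=
  fun m t ht => (hXY m t ht).trans (hYZ m t ht)

theorem Real.rpow_one_div_rpow_div {x : ℝ} (hx : 0 ≤ x) {α : ℝ} (hα : α ≠ 0) (β : ℝ) :
    (x ^ (1 / α)) ^ (α / β) = x ^ (1 / β) := by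
  rw [← Real.rpow_mul hx]
  congr 1
  field_simp

theorem IsSelfSimilar.hasSameFDD_rpow_one_div {Ω : Type*} [MeasurableSpace Ω]
    {P : Measure Ω} {α β : ℝ} {X : ℝ → Ω → ℝ} (hss : IsSelfSimilar P (α / β) X)
    (hα : α ≠ 0) {c : ℝ} (hc : 0 < c) :
    HasSameFDD P P (fun t ω => X (c ^ (1 / α) * t) ω) (fun t ω => c ^ (1 / β) * X t ω) := by
  simpa only [Real.rpow_one_div_rpow_div hc.le hα] using hss _ (Real.rpow_pos_of_pos hc (1 / α))

theorem stmt11_general {Ω : Type*} [MeasurableSpace Ω] (P : Measure Ω)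
    (α β : ℝ) (hα : 0 < α) (X : ℝ → Ω → ℝ)
    (hIDT : IsAlphaIDT P α X)
    (hss : IsSelfSimilar P (α / β) X) :
    IsStrictlyStable P β X := fun n hn =>
  (hIDT n hn).symm.trans (hss.hasSameFDD_rpow_one_div hα.ne' (Nat.cast_pos.2 hn))

/-- a non-trivial `α`-IDT process which is `(α/β)`-selfsimilar is strictly
`β`-stable. -/
theorem stmt11 {Ω : Type*} [MeasurableSpace Ω] (P : Measure Ω) [IsProbabilityMeasure P]
    (α β : ℝ) (hα : 0 < α) (hβ : 0 < β) (X : ℝ → Ω → ℝ) (hXmeas : ∀ t, Measurable (X t))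
    (hnt : IsNonTrivialProcess P X)
    (hIDT : IsAlphaIDT P α X)
    (hss : IsSelfSimilar P (α / β) X) :
    IsStrictlyStable P β X :=
  stmt11_general P α β hα X hIDT hss
end

section
/- Let X = (X_t)_{t ≥ 0} be a stochastically continuous α-IDT process. Then for every b ∈ (0,1), every finite family of times t_1, …, t_m ≥ 0 and every θ_1, …, θ_m ∈ ℝ, the finite-dimensional characteristic functions factorize as E[exp(i Σ_{k=1}^m θ_k X_{t_k})] = E[exp(i Σ_{k=1}^m θ_k X_{b^{1/α} t_k})] · E[exp(i Σ_{k=1}^m θ_k X_{(1−b)^{1/α} t_k})]; in other words, X is temporally selfdecomposable, with b^{1/α}-residual whose finite-dimensional distributions are those of X rescaled in time by (1−b)^{1/α}. -/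
/-!
Fix times `t` and frequencies `θ` and let `F s = E[exp(i Σ θ_k X_{s t_k})]`. Realizing the `n`
independent copies on the product space, the α-IDT property says `F (n^{1/α} s) = F s ^ n`.
With `u = q^{-1/α}` this gives, for `0 < p < q`,
`F 1 = F u ^ q = F u ^ p * F u ^ (q - p) = F ((p/q)^{1/α}) * F ((1 - p/q)^{1/α})`,
i.e. the factorization at every rational `b ∈ (0,1)`. Stochastic continuity makes `F` continuous
on `[0,∞)`, since convergence in probability implies convergence in law, and density of the
rationals extends the factorization to all `b ∈ (0,1)`.
-/

open MeasureTheory ProbabilityTheory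

/-- A process is stochastically continuous (continuous in probability) on `[0,∞)`. -/
def StochasticallyContinuous {Ω : Type*} [MeasurableSpace Ω] (P : Measure Ω)
    (X : ℝ → Ω → ℝ) : Prop :=
  ∀ s : ℝ, 0 ≤ s → TendstoInMeasure P X (nhdsWithin s (Set.Ici 0)) (X s)

open Filter Topology Set BoundedContinuousFunction

namespace MeasureTheory

variable {Ω ι : Type*} [MeasurableSpace Ω] {P : Measure Ω}

lemma tendstoInMeasure_pi {κ : Type*} [Fintype κ] {E : κ → Type*}
    [∀ k, PseudoMetricSpace (E k)] {l : Filter ι} {f : ι → Ω → ∀ k, E k} {g : Ω → ∀ k, E k}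
    (h : ∀ k, TendstoInMeasure P (fun i ω => f i ω k) l (fun ω => g ω k)) :
    TendstoInMeasure P f l g := by
  simp_rw [tendstoInMeasure_iff_dist] at h ⊢
  intro ε hε
  have hle (i : ι) :
      P {ω | ε ≤ dist (f i ω) (g ω)} ≤ ∑ k, P {ω | ε ≤ dist (f i ω k) (g ω k)} := by
    refine (measure_mono fun ω hω => ?_).trans (measure_iUnion_fintype_le _ _)
    by_contra hc
    simp only [mem_iUnion, mem_ofPred_eq, not_exists, not_le] at hc
    exact ((dist_pi_lt_iff hε).2 hc).not_ge hω
  refine tendsto_of_tendsto_of_tendsto_of_le_of_le tendsto_const_nhds ?_ (fun _ => zero_le) hle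
  simpa using tendsto_finsetSum Finset.univ fun k _ => h k ε hε

lemma TendstoInMeasure.tendsto_integral_comp [IsProbabilityMeasure P] {E 𝕜 : Type*} [RCLike 𝕜]
    [PseudoMetricSpace E] [MeasurableSpace E] [BorelSpace E] {l : Filter ι}
    [l.IsCountablyGenerated] {f : ι → Ω → E} {g : Ω → E}
    (h : TendstoInMeasure P f l g) (hf : ∀ i, AEMeasurable (f i) P) (φ : E →ᵇ 𝕜) :
    Tendsto (fun i => ∫ ω, φ (f i ω) ∂P) l (𝓝 (∫ ω, φ (g ω) ∂P)) := by
  rcases l.eq_or_neBot with rfl | _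
  · exact tendsto_bot
  have hlaw := (ProbabilityMeasure.tendsto_iff_forall_integral_rclike_tendsto 𝕜).1
    (h.tendstoInDistribution hf).tendsto φ
  simpa only [ProbabilityMeasure.coe_mk, integral_map (hf _) φ.continuous.aestronglyMeasurable,
    integral_map (h.aemeasurable hf) φ.continuous.aestronglyMeasurable] using hlaw

end MeasureTheory

noncomputable def expIDot {ι : Type*} [Fintype ι] (θ : ι → ℝ) : (ι → ℝ) →ᵇ ℂ :=
  .mkOfBound ⟨fun y => Complex.exp (Complex.I * ∑ k, (θ k : ℂ) * (y k : ℂ)), by fun_prop⟩ 2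
    fun y z => by
      refine (dist_le_norm_add_norm _ _).trans_eq ?_
      norm_num [Complex.norm_exp]

section

variable {Ω : Type*} [MeasurableSpace Ω] {P : Measure Ω} {X : ℝ → Ω → ℝ} {m : ℕ}
  {t : Fin m → ℝ}

noncomputable def fddCharFun (P : Measure Ω) (X : ℝ → Ω → ℝ) (t θ : Fin m → ℝ) (s : ℝ) : ℂ :=
  ∫ ω, Complex.exp (Complex.I * ∑ k, (θ k : ℂ) * (X (s * t k) ω : ℂ)) ∂P

lemma HasSameFDD.integral_comp {Ω' E : Type*} [MeasurableSpace Ω'] [NormedAddCommGroup E]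
    [NormedSpace ℝ E] [MeasurableSpace E] [BorelSpace E] {P' : Measure Ω'} {Y : ℝ → Ω' → ℝ}
    (h : HasSameFDD P P' X Y) (hX : ∀ t, Measurable (X t)) (hY : ∀ t, Measurable (Y t))
    (ht : ∀ i, 0 ≤ t i) {φ : (Fin m → ℝ) → E} (hφ : Measurable φ) :
    ∫ ω, φ (fun i => X (t i) ω) ∂P = ∫ ω, φ (fun i => Y (t i) ω) ∂P' :=
  (IdentDistrib.comp ⟨(measurable_pi_lambda _ fun _ => hX _).aemeasurable,
    (measurable_pi_lambda _ fun _ => hY _).aemeasurable, h m t ht⟩ hφ).integral_eq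

lemma integral_pi_cexp_sum_sum [SigmaFinite P] {ι : Type*} [Fintype ι] (n : ℕ) (θ : ι → ℝ)
    (Y : ι → Ω → ℝ) :
    ∫ ω : Fin n → Ω, Complex.exp (Complex.I * ∑ k, (θ k : ℂ) * ((∑ j, Y k (ω j) : ℝ) : ℂ))
        ∂(Measure.pi fun _ => P)
      = (∫ ω, Complex.exp (Complex.I * ∑ k, (θ k : ℂ) * (Y k ω : ℂ)) ∂P) ^ n := by
  have hprod (ω : Fin n → Ω) :
      Complex.exp (Complex.I * ∑ k, (θ k : ℂ) * ((∑ j, Y k (ω j) : ℝ) : ℂ))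
        = ∏ j, Complex.exp (Complex.I * ∑ k, (θ k : ℂ) * (Y k (ω j) : ℂ)) := by
    rw [← Complex.exp_sum, ← Finset.mul_sum, Finset.sum_comm]
    push_cast
    simp only [Finset.mul_sum]
  simp_rw [hprod]
  rw [integral_fintype_prod_eq_pow
    (fun ω => Complex.exp (Complex.I * ∑ k, (θ k : ℂ) * (Y k ω : ℂ))), Fintype.card_fin]

lemma IsAlphaIDT.fddCharFun_rpow_mul [SigmaFinite P] {α : ℝ} (hIDT : IsAlphaIDT P α X)
    (hX : ∀ t, Measurable (X t)) (ht : ∀ i, 0 ≤ t i) (θ : Fin m → ℝ) {n : ℕ}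
    (hn : 0 < n) {s : ℝ} (hs : 0 ≤ s) :
    fddCharFun P X t θ ((n : ℝ) ^ (1 / α) * s) = fddCharFun P X t θ s ^ n := by
  have hlaw := (hIDT n hn).integral_comp (fun _ => hX _)
    (fun _ => Finset.measurable_sum _ fun j _ => (hX _).comp (measurable_pi_apply j))
    (t := fun k => s * t k) (fun k => mul_nonneg hs (ht k)) (expIDot θ).continuous.measurable
  simp only [fddCharFun, mul_assoc]
  exact hlaw.trans (integral_pi_cexp_sum_sum n θ fun k => X (s * t k))

lemma IsAlphaIDT.fddCharFun_one_eq_mul_of_nat [SigmaFinite P] {α : ℝ} (hIDT : IsAlphaIDT P α X)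
    (hX : ∀ t, Measurable (X t)) (ht : ∀ i, 0 ≤ t i) (θ : Fin m → ℝ) {p q : ℕ} (hp : 0 < p)
    (hpq : p < q) :
    fddCharFun P X t θ 1
      = fddCharFun P X t θ (((p : ℝ) / q) ^ (1 / α))
        * fddCharFun P X t θ ((1 - (p : ℝ) / q) ^ (1 / α)) := by
  set F := fddCharFun P X t θ
  have hq : (0 : ℝ) < q := by exact_mod_cast hp.trans hpq
  set u : ℝ := (q : ℝ)⁻¹ ^ (1 / α)
  have hscale (k : ℕ) : (k : ℝ) ^ (1 / α) * u = ((k : ℝ) / q) ^ (1 / α) := by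
    rw [← Real.mul_rpow (Nat.cast_nonneg k) (inv_nonneg.2 hq.le), ← div_eq_mul_inv]
  have hpow {k : ℕ} (hk : 0 < k) : F (((k : ℝ) / q) ^ (1 / α)) = F u ^ k := by
    rw [← hscale]
    exact hIDT.fddCharFun_rpow_mul hX ht θ hk (by positivity)
  have hrest : 1 - (p : ℝ) / q = ((q - p : ℕ) : ℝ) / q := by
    rw [Nat.cast_sub hpq.le]
    field_simp
  calc F 1 = F (((q : ℝ) / q) ^ (1 / α)) := by rw [div_self hq.ne', Real.one_rpow]
    _ = F u ^ p * F u ^ (q - p) := by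
      rw [hpow (hp.trans hpq), ← pow_add, Nat.add_sub_cancel' hpq.le]
    _ = _ := by rw [hrest, hpow hp, hpow (Nat.sub_pos_of_lt hpq)]

lemma IsAlphaIDT.fddCharFun_one_eq_mul_of_rat [SigmaFinite P] {α : ℝ} (hIDT : IsAlphaIDT P α X)
    (hX : ∀ t, Measurable (X t)) (ht : ∀ i, 0 ≤ t i) (θ : Fin m → ℝ) {r : ℚ} (hr₀ : 0 < r)
    (hr₁ : r < 1) :
    fddCharFun P X t θ 1
      = fddCharFun P X t θ ((r : ℝ) ^ (1 / α)) * fddCharFun P X t θ ((1 - r : ℝ) ^ (1 / α)) := by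
  have hnum : 0 < r.num := Rat.num_pos.2 hr₀
  have hr : (r : ℝ) = (r.num.natAbs : ℝ) / r.den := by
    rw [Rat.cast_def, Nat.cast_natAbs, abs_of_pos (by exact_mod_cast hnum)]
  rw [hr]
  refine hIDT.fddCharFun_one_eq_mul_of_nat hX ht θ (Int.natAbs_pos.2 hnum.ne') ?_
  have := Rat.num_lt_denom_iff.2 hr₁
  omega

lemma StochasticallyContinuous.continuousOn_fddCharFun [IsProbabilityMeasure P]
    (hcont : StochasticallyContinuous P X)
    (hX : ∀ t, Measurable (X t)) (ht : ∀ i, 0 ≤ t i) (θ : Fin m → ℝ) :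
    ContinuousOn (fddCharFun P X t θ) (Ici 0) := by
  intro s hs
  have hcoord (k : Fin m) :
      TendstoInMeasure P (fun r ω => X (r * t k) ω) (𝓝[Ici 0] s) (X (s * t k)) := by
    refine (hcont _ (mul_nonneg hs (ht k))).comp (tendsto_nhdsWithin_iff.2 ⟨?_, ?_⟩)
    · exact (tendsto_nhdsWithin_of_tendsto_nhds (continuous_id.mul_const (t k)).continuousAt)
    · exact eventually_mem_nhdsWithin.mono fun r hr => mul_nonneg hr (ht k)
  exact (tendstoInMeasure_pi hcoord).tendsto_integral_comp
    (fun _ => (measurable_pi_lambda _ fun _ => hX _).aemeasurable) (expIDot θ)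

end

theorem stmt15_general {Ω : Type*} [MeasurableSpace Ω] (P : Measure Ω) [IsProbabilityMeasure P]
    (α : ℝ) (X : ℝ → Ω → ℝ) (hXmeas : ∀ t, Measurable (X t))
    (hcont : StochasticallyContinuous P X)
    (hIDT : IsAlphaIDT P α X) :
    ∀ b : ℝ, 0 < b → b < 1 → ∀ (m : ℕ) (t θ : Fin m → ℝ), (∀ i, 0 ≤ t i) →
      (∫ ω, Complex.exp (Complex.I * ∑ k, (θ k : ℂ) * (X (t k) ω : ℂ)) ∂P)
        = (∫ ω, Complex.exp
              (Complex.I * ∑ k, (θ k : ℂ) * (X (b ^ (1 / α) * t k) ω : ℂ)) ∂P)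
          * ∫ ω, Complex.exp
              (Complex.I * ∑ k, (θ k : ℂ) * (X ((1 - b) ^ (1 / α) * t k) ω : ℂ)) ∂P := by
  intro b hb₀ hb₁ m t θ ht
  set F := fddCharFun P X t θ
  have hF := hcont.continuousOn_fddCharFun hXmeas ht θ
  have hscale {f : ℝ → ℝ} (hf : Continuous f) (hpos : MapsTo f (Ioo 0 1) (Ioi 0)) :
      ContinuousOn (fun b => F (f b ^ (1 / α))) (Ioo 0 1) :=
    hF.comp (hf.continuousOn.rpow_const fun b hb => .inl (hpos hb).ne')
      fun b hb => Real.rpow_nonneg (hpos hb).le _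
  have hfactor : EqOn (fun _ => F 1) (fun b => F (b ^ (1 / α)) * F ((1 - b) ^ (1 / α)))
      (Ioo 0 1) := by
    refine EqOn.of_subset_closure ?_ continuousOn_const
      ((hscale continuous_id fun b hb => hb.1).mul
        (hscale (continuous_const.sub continuous_id) fun b hb => sub_pos.2 hb.2))
      inter_subset_left (Rat.denseRange_cast.open_subset_closure_inter isOpen_Ioo)
    rintro _ ⟨hr, r, rfl⟩
    exact hIDT.fddCharFun_one_eq_mul_of_rat hXmeas ht θ (by exact_mod_cast hr.1)
      (by exact_mod_cast hr.2)
  simpa only [F, fddCharFun, one_mul] using hfactor ⟨hb₀, hb₁⟩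

/-- a stochastically continuous `α`-IDT process is temporally selfdecomposable:
for every `b ∈ (0,1)`, its finite-dimensional characteristic functions factorize as
`E[exp(iΣ θ_k X_{t_k})] = E[exp(iΣ θ_k X_{b^{1/α} t_k})] ⬝ E[exp(iΣ θ_k X_{(1-b)^{1/α} t_k})]`,
i.e. the `b^{1/α}`-residual has the finite-dimensional distributions of `X` rescaled in time
by `(1-b)^{1/α}`. -/
theorem stmt15 {Ω : Type*} [MeasurableSpace Ω] (P : Measure Ω) [IsProbabilityMeasure P]
    (α : ℝ) (hα : 0 < α) (X : ℝ → Ω → ℝ) (hXmeas : ∀ t, Measurable (X t))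
    (hcont : StochasticallyContinuous P X)
    (hIDT : IsAlphaIDT P α X) :
    ∀ b : ℝ, 0 < b → b < 1 → ∀ (m : ℕ) (t θ : Fin m → ℝ), (∀ i, 0 ≤ t i) →
      (∫ ω, Complex.exp (Complex.I * ∑ k, (θ k : ℂ) * (X (t k) ω : ℂ)) ∂P)
        = (∫ ω, Complex.exp
              (Complex.I * ∑ k, (θ k : ℂ) * (X (b ^ (1 / α) * t k) ω : ℂ)) ∂P)
          * ∫ ω, Complex.exp
              (Complex.I * ∑ k, (θ k : ℂ) * (X ((1 - b) ^ (1 / α) * t k) ω : ℂ)) ∂P :=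
  stmt15_general P α X hXmeas hcont hIDT
end

section
/- Let X = (X_t)_{t ≥ 0} be an α-IDT process that is selfdecomposable: for a given c ∈ (0,1), suppose there exist processes X' and U^{(c)} that are independent of each other, such that X' has the same finite-dimensional distributions as X, the finite-dimensional characteristic functions of cX' are nowhere vanishing, and X has the same finite-dimensional distributions as cX' + U^{(c)}. Then the c-residual U^{(c)} is also an α-IDT process. -/
open MeasureTheory ProbabilityTheory

/-!
Pass to characteristic functions `φ_Z(u)` of the finite-dimensional laws at times `u`, and
put `r = n ^ (1 / α)`. The IDT property gives `φ_X(r u) = φ_X(u) ^ n`; independence turns the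
decomposition into `φ_X = φ_{cX'} φ_U`; and since `cX'` is a rescaled copy of `X`, also
`φ_{cX'}(r u) = φ_{cX'}(u) ^ n`. Cancelling the nonvanishing factor `φ_{cX'}(r u)` leaves
`φ_U(r u) = φ_U(u) ^ n`, which is the IDT property of `U` by uniqueness of characteristic
functions.
-/

section CharFunDual

variable {Ω E : Type*} [MeasurableSpace Ω] {P : Measure Ω}
  [NormedAddCommGroup E] [NormedSpace ℝ E] [MeasurableSpace E] [BorelSpace E]

lemma charFunDual_map_smul {F : Ω → E} (hF : AEMeasurable F P) (c : ℝ) (L : StrongDual ℝ E) :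
    charFunDual (P.map fun ω => c • F ω) L = charFunDual (P.map F) (c • L) := by
  rw [charFunDual_apply, charFunDual_apply, integral_map (by fun_prop) (by fun_prop),
    integral_map hF (by fun_prop)]
  simp

variable [SecondCountableTopology E]

lemma charFunDual_map_pi_sum [IsProbabilityMeasure P] {ι : Type*} [Fintype ι] {F : Ω → E}
    (hF : Measurable F) (L : StrongDual ℝ E) :
    charFunDual ((Measure.pi fun _ : ι => P).map fun ω => ∑ j, F (ω j)) L
      = charFunDual (P.map F) L ^ Fintype.card ι := by
  have hpi : (Measure.pi fun _ : ι => P).map (fun ω j => F (ω j))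
      = Measure.pi fun _ : ι => P.map F := Measure.pi_map_pi fun _ => hF.aemeasurable
  have := Measure.isProbabilityMeasure_map (μ := P) hF.aemeasurable
  rw [show (fun ω : ι → Ω => ∑ j, F (ω j)) = (fun p => ∑ j, p j) ∘ fun ω j => F (ω j) from rfl,
    ← Measure.map_map (by fun_prop) (by fun_prop), hpi, charFunDual_map_sum_pi_eq_prod]
  simp

end CharFunDual

lemma charFunDual_map_eq_integral_exp_sum {Ω ι : Type*} [MeasurableSpace Ω] [Fintype ι]
    [DecidableEq ι] {P : Measure Ω} {F : Ω → ι → ℝ} (hF : AEMeasurable F P)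
    (L : StrongDual ℝ (ι → ℝ)) :
    charFunDual (P.map F) L
      = ∫ ω, Complex.exp (Complex.I * ∑ k, (L (Pi.single k 1) : ℂ) * (F ω k : ℂ)) ∂P := by
  rw [charFunDual_apply, integral_map hF (by fun_prop)]
  congr with ω
  conv_lhs => rw [pi_eq_sum_univ' (F ω)]
  simp [mul_comm]

lemma charFunDual_map_fdd_pi_sum {Ω T ι : Type*} [MeasurableSpace Ω] {P : Measure Ω}
    [IsProbabilityMeasure P] [Fintype ι] {Y : T → Ω → ℝ} (hY : ∀ t, Measurable (Y t))
    (u : ι → T) (n : ℕ) (L : StrongDual ℝ (ι → ℝ)) :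
    charFunDual ((Measure.pi fun _ : Fin n => P).map fun ω i => ∑ j, Y (u i) (ω j)) L
      = charFunDual (P.map fun ω i => Y (u i) ω) L ^ n := by
  have hsum : (fun (ω : Fin n → Ω) i => ∑ j, Y (u i) (ω j))
      = fun ω => ∑ j, (fun ω' i => Y (u i) ω') (ω j) := by
    ext ω i; simp
  rw [hsum, charFunDual_map_pi_sum (F := fun ω' i => Y (u i) ω') (by fun_prop),
    Fintype.card_fin]

lemma IsAlphaIDT.charFunDual_map_eq_pow {Ω : Type*} [MeasurableSpace Ω] {P : Measure Ω}
    [IsProbabilityMeasure P] {α : ℝ} {X : ℝ → Ω → ℝ} (hX : IsAlphaIDT P α X)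
    (hXmeas : ∀ t, Measurable (X t)) {n : ℕ} (hn : 0 < n) {m : ℕ} {t : Fin m → ℝ}
    (ht : ∀ i, 0 ≤ t i) (L : StrongDual ℝ (Fin m → ℝ)) :
    charFunDual (P.map fun ω i => X ((n : ℝ) ^ (1 / α) * t i) ω) L
      = charFunDual (P.map fun ω i => X (t i) ω) L ^ n := by
  rw [hX n hn m t ht, charFunDual_map_fdd_pi_sum hXmeas]

lemma IndepFun.charFunDual_map_fdd_add {Ω T ι : Type*} [MeasurableSpace Ω] {P : Measure Ω}
    [IsFiniteMeasure P] [Fintype ι] {Y Z : T → Ω → ℝ} (hY : ∀ t, Measurable (Y t))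
    (hZ : ∀ t, Measurable (Z t))
    (hYZ : IndepFun (fun ω t => Y t ω) (fun ω t => Z t ω) P) (u : ι → T) :
    charFunDual (P.map fun ω i => Y (u i) ω + Z (u i) ω)
      = charFunDual (P.map fun ω i => Y (u i) ω) * charFunDual (P.map fun ω i => Z (u i) ω) := by
  have hproj : Measurable fun (x : T → ℝ) i => x (u i) := by fun_prop
  exact IndepFun.charFunDual_map_fun_add_eq_mul (by fun_prop) (by fun_prop)
    (hYZ.comp hproj hproj)

theorem stmt16_general {Ω : Type*} [MeasurableSpace Ω] (P : Measure Ω) [IsProbabilityMeasure P]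
    (α : ℝ) (c : ℝ)
    (X X' U : ℝ → Ω → ℝ)
    (hXmeas : ∀ t, Measurable (X t)) (hX'meas : ∀ t, Measurable (X' t))
    (hUmeas : ∀ t, Measurable (U t))
    (hIDT : IsAlphaIDT P α X)
    (hindep : ProbabilityTheory.IndepFun
      (fun ω => (fun t => X' t ω : ℝ → ℝ)) (fun ω => (fun t => U t ω : ℝ → ℝ)) P)
    (hcopy : HasSameFDD P P X' X)
    (hnonvanish : ∀ (m : ℕ) (t θ : Fin m → ℝ), (∀ i, 0 ≤ t i) →
      (∫ ω, Complex.exp (Complex.I * ∑ k, (θ k : ℂ) * ((c * X' (t k) ω : ℝ) : ℂ)) ∂P) ≠ 0)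
    (hdecomp : HasSameFDD P P X (fun t ω => c * X' t ω + U t ω)) :
    IsAlphaIDT P α U := by
  intro n hn m t ht
  set s : Fin m → ℝ := fun i => (n : ℝ) ^ (1 / α) * t i
  have hs : ∀ i, 0 ≤ s i := fun i => mul_nonneg (by positivity) (ht i)
  have hscale : ∀ u : Fin m → ℝ, (∀ i, 0 ≤ u i) → ∀ L,
      charFunDual (P.map fun ω i => c * X' (u i) ω) L
        = charFunDual (P.map fun ω i => X (u i) ω) (c • L) := fun u hu L => by
    rw [← hcopy m u hu]
    exact charFunDual_map_smul (F := fun ω i => X' (u i) ω) (by fun_prop) c L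
  have hsplit : ∀ u : Fin m → ℝ, (∀ i, 0 ≤ u i) → ∀ L,
      charFunDual (P.map fun ω i => X (u i) ω) L
        = charFunDual (P.map fun ω i => c * X' (u i) ω) L
          * charFunDual (P.map fun ω i => U (u i) ω) L := fun u hu L => by
    rw [hdecomp m u hu]
    refine congrFun (IndepFun.charFunDual_map_fdd_add (Y := fun t ω => c * X' t ω)
      (fun t => (hX'meas t).const_mul c) hUmeas ?_ u) L
    exact hindep.comp (φ := fun x t => c * x t) (ψ := id) (by fun_prop) measurable_id
  refine Measure.ext_of_charFunDual (funext fun L => ?_)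
  have hne : charFunDual (P.map fun ω i => c * X' (s i) ω) L ≠ 0 := by
    rw [charFunDual_map_eq_integral_exp_sum (by fun_prop)]
    exact hnonvanish m s _ hs
  rw [charFunDual_map_fdd_pi_sum hUmeas]
  refine mul_left_cancel₀ hne ?_
  calc charFunDual (P.map fun ω i => c * X' (s i) ω) L
        * charFunDual (P.map fun ω i => U (s i) ω) L
      = charFunDual (P.map fun ω i => X (s i) ω) L := (hsplit s hs L).symm
    _ = (charFunDual (P.map fun ω i => c * X' (t i) ω) L
          * charFunDual (P.map fun ω i => U (t i) ω) L) ^ n := by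
      rw [hIDT.charFunDual_map_eq_pow hXmeas hn ht, hsplit t ht]
    _ = _ := by
      rw [mul_pow, hscale s hs, hscale t ht, hIDT.charFunDual_map_eq_pow hXmeas hn ht]

/-- let `X` be an `α`-IDT process which is selfdecomposable at `c ∈ (0,1)`:
there are processes `X'` and `U` (the `c`-residual), independent of each other, with `X'` a
copy of `X`, the finite-dimensional characteristic functions of `cX'` nowhere vanishing, and
`X` having the same finite-dimensional distributions as `cX' + U`.  Then `U` is also an
`α`-IDT process. -/
theorem stmt16 {Ω : Type*} [MeasurableSpace Ω] (P : Measure Ω) [IsProbabilityMeasure P]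
    (α : ℝ) (hα : 0 < α) (c : ℝ) (hc0 : 0 < c) (hc1 : c < 1)
    (X X' U : ℝ → Ω → ℝ)
    (hXmeas : ∀ t, Measurable (X t)) (hX'meas : ∀ t, Measurable (X' t))
    (hUmeas : ∀ t, Measurable (U t))
    (hIDT : IsAlphaIDT P α X)
    (hindep : ProbabilityTheory.IndepFun
      (fun ω => (fun t => X' t ω : ℝ → ℝ)) (fun ω => (fun t => U t ω : ℝ → ℝ)) P)
    (hcopy : HasSameFDD P P X' X)
    (hnonvanish : ∀ (m : ℕ) (t θ : Fin m → ℝ), (∀ i, 0 ≤ t i) →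
      (∫ ω, Complex.exp (Complex.I * ∑ k, (θ k : ℂ) * ((c * X' (t k) ω : ℝ) : ℂ)) ∂P) ≠ 0)
    (hdecomp : HasSameFDD P P X (fun t ω => c * X' t ω + U t ω)) :
    IsAlphaIDT P α U :=
  stmt16_general P α c X X' U hXmeas hX'meas hUmeas hIDT hindep hcopy hnonvanish hdecomp
end
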